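/- There exists a constant C > 0, depending only on p, q, κ and ∑_k α_k (but not on u₁, u₂), such that for all u₁, u₂ ∈ L²(ℝⁿ) ∩ L^p(ℝⁿ): ∑_{k∈ℕ} ∫_{ℝⁿ} κ(x)² ( σ_{2,k}(x, u₁(x)) − σ_{2,k}(x, u₂(x)) )² dx ≤ C ( 1 + ‖u₁‖_{L^p}^{p/2} + ‖u₂‖_{L^p}^{p/2} ) ‖u₁ − u₂‖_{L²}. -/

import Mathlib

open MeasureTheory
open scoped ENNReal NNReal

private lemma aux_rpow_mul_self {q b : ℝ} (hq : 2 ≤ q) (hb : 0 ≤ b) :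
    b ^ (q - 2) * b = b ^ (q - 1) := by
  rcases eq_or_lt_of_le hb with h0 | h0
  · rw [← h0]
    rw [Real.zero_rpow (by intro h; nlinarith : q - 1 ≠ 0), mul_zero]
  · rw [show q - 1 = (q - 2) + 1 by ring, Real.rpow_add_one (ne_of_gt h0)]

private lemma aux_cross {q a b : ℝ} (hq : 2 ≤ q) (ha : 0 ≤ a) (hb : 0 ≤ b) :
    a ^ (q - 2) * b ≤ a ^ (q - 1) + b ^ (q - 1) := by
  rcases le_total a b with h | h
  · calc a ^ (q - 2) * b ≤ b ^ (q - 2) * b :=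
          mul_le_mul_of_nonneg_right (Real.rpow_le_rpow ha h (by linarith)) hb
      _ = b ^ (q - 1) := aux_rpow_mul_self hq hb
      _ ≤ a ^ (q - 1) + b ^ (q - 1) := le_add_of_nonneg_left (Real.rpow_nonneg ha _)
  · calc a ^ (q - 2) * b ≤ a ^ (q - 2) * a :=
          mul_le_mul_of_nonneg_left h (Real.rpow_nonneg ha _)
      _ = a ^ (q - 1) := aux_rpow_mul_self hq ha
      _ ≤ a ^ (q - 1) + b ^ (q - 1) := le_add_of_nonneg_right (Real.rpow_nonneg hb _)

private lemma aux_rpow_le {e pp a : ℝ} (h2 : 2 ≤ e) (hep : e ≤ pp) (ha : 0 ≤ a) :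
    a ^ e ≤ a ^ (2 : ℝ) + a ^ pp := by
  rcases eq_or_lt_of_le ha with h0 | h0
  · rw [← h0, Real.zero_rpow (by intro h; nlinarith : e ≠ 0)]
    positivity
  rcases le_total a 1 with h1 | h1
  · have := Real.rpow_le_rpow_of_exponent_ge h0 h1 h2
    have h2' := Real.rpow_nonneg ha pp
    linarith
  · have := Real.rpow_le_rpow_of_exponent_le h1 hep
    have h2' := Real.rpow_nonneg ha 2
    linarith

private lemma aux_sq_rpow {e a : ℝ} (ha : 0 ≤ a) : (a ^ e) ^ 2 = a ^ (e * 2) := by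
  rw [Real.rpow_mul ha, Real.rpow_two]

/-- Young-type bound: `c² a² ≤ (K²)^(p/(p-2)) c² + a^p` for `c² ≤ K²`, `1 ≤ K`. -/
private lemma aux_young {p K c a : ℝ} (hp : 2 < p) (hK : 1 ≤ K) (hc : c ^ 2 ≤ K ^ 2)
    (ha : 0 ≤ a) : c ^ 2 * a ^ 2 ≤ (K ^ 2) ^ (p / (p - 2)) * c ^ 2 + a ^ p := by
  have hp2 : (0:ℝ) < p - 2 := by linarith
  have hr1 : (1:ℝ) < p / (p - 2) := by
    rw [lt_div_iff₀ hp2]; linarith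
  have hconj : Real.HolderConjugate (p / (p - 2)) (p / 2) := by
    rw [Real.holderConjugate_iff]
    refine ⟨hr1, ?_⟩
    rw [inv_div, inv_div]
    field_simp
    ring
  have hY := Real.young_inequality_of_nonneg (sq_nonneg c) (sq_nonneg a) hconj
  have ha2 : (a ^ 2 : ℝ) ^ (p / 2) = a ^ p := by
    rw [← Real.rpow_two, ← Real.rpow_mul ha, show (2:ℝ) * (p/2) = p by ring]
  have hc2r : (c ^ 2 : ℝ) ^ (p / (p - 2)) ≤ (K ^ 2) ^ (p / (p - 2)) * c ^ 2 := by
    rcases eq_or_lt_of_le (sq_nonneg c) with h0 | h0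
    · rw [← h0, Real.zero_rpow (by positivity : p / (p - 2) ≠ 0)]
      positivity
    · have e1 : (c ^ 2 : ℝ) ^ (p / (p - 2)) = (c ^ 2) ^ (p / (p - 2) - 1) * c ^ 2 := by
        rw [show p / (p - 2) = (p / (p - 2) - 1) + 1 by ring,
          Real.rpow_add_one (ne_of_gt h0)]
        ring_nf
      rw [e1]
      have e2 : (c ^ 2 : ℝ) ^ (p / (p - 2) - 1) ≤ (K ^ 2) ^ (p / (p - 2) - 1) :=
        Real.rpow_le_rpow (sq_nonneg c) hc (by linarith)
      have e3 : (K ^ 2 : ℝ) ^ (p / (p - 2) - 1) ≤ (K ^ 2) ^ (p / (p - 2)) :=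
        Real.rpow_le_rpow_of_exponent_le (by nlinarith) (by linarith)
      exact mul_le_mul_of_nonneg_right (e2.trans e3) (sq_nonneg c)
  have hdiv1 : (c ^ 2 : ℝ) ^ (p / (p - 2)) / (p / (p - 2)) ≤ (c ^ 2) ^ (p / (p - 2)) :=
    div_le_self (Real.rpow_nonneg (sq_nonneg c) _) hr1.le
  have hdiv2 : (a ^ 2 : ℝ) ^ (p / 2) / (p / 2) ≤ (a ^ 2) ^ (p / 2) :=
    div_le_self (Real.rpow_nonneg (sq_nonneg a) _) (by linarith [hconj.symm.lt])
  calc c ^ 2 * a ^ 2 ≤ (c ^ 2) ^ (p / (p - 2)) / (p / (p - 2)) + (a ^ 2) ^ (p / 2) / (p / 2) := hY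
    _ ≤ (c ^ 2) ^ (p / (p - 2)) + (a ^ 2) ^ (p / 2) := add_le_add hdiv1 hdiv2
    _ ≤ (K ^ 2) ^ (p / (p - 2)) * c ^ 2 + a ^ p := by rw [ha2]; exact add_le_add_left hc2r _

set_option maxHeartbeats 1000000 in
/-- Key pointwise estimate. -/
private lemma key_pointwise {p q K c a b : ℝ} (hp : 2 < p) (hq : 2 ≤ q) (hq' : q ≤ 1 + p / 2)
    (hK : 1 ≤ K) (ha : 0 ≤ a) (hb : 0 ≤ b) (hc : c ^ 2 ≤ K ^ 2) :
    (c ^ 2 * ((1 + a ^ (q - 2) + b ^ (q - 2)) * (a + b))) ^ 2 ≤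
      (64 * (4 * (K ^ 2 * ((K ^ 2) ^ (p / (p - 2)))) + 2 * K ^ 2 + K ^ 4)) *
        (c ^ 2 + a ^ p + b ^ p) := by
  have hA : 0 ≤ a ^ (q - 2) := Real.rpow_nonneg ha _
  have hB : 0 ≤ b ^ (q - 2) := Real.rpow_nonneg hb _
  have hA1 : 0 ≤ a ^ (q - 1) := Real.rpow_nonneg ha _
  have hB1 : 0 ≤ b ^ (q - 1) := Real.rpow_nonneg hb _
  -- step 1: the factor is at most 4 * S
  have h1 : (1 + a ^ (q - 2) + b ^ (q - 2)) * (a + b) ≤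
      4 * (a + b + a ^ (q - 1) + b ^ (q - 1)) := by
    have hAa := aux_cross hq ha ha
    have hAb := aux_cross hq ha hb
    have hBa := aux_cross hq hb ha
    have hBb := aux_cross hq hb hb
    nlinarith [mul_nonneg hA ha, mul_nonneg hB hb]
  have hT0 : 0 ≤ (1 + a ^ (q - 2) + b ^ (q - 2)) * (a + b) := by positivity
  have h2 : ((1 + a ^ (q - 2) + b ^ (q - 2)) * (a + b)) ^ 2 ≤
      16 * (a + b + a ^ (q - 1) + b ^ (q - 1)) ^ 2 := by
    nlinarith [pow_le_pow_left₀ hT0 h1 2]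
  have h3 : (a + b + a ^ (q - 1) + b ^ (q - 1)) ^ 2 ≤
      4 * (a ^ 2 + b ^ 2 + (a ^ (q - 1)) ^ 2 + (b ^ (q - 1)) ^ 2) := by
    nlinarith [sq_nonneg (a - b), sq_nonneg (a - a ^ (q - 1)), sq_nonneg (a - b ^ (q - 1)),
      sq_nonneg (b - a ^ (q - 1)), sq_nonneg (b - b ^ (q - 1)),
      sq_nonneg (a ^ (q - 1) - b ^ (q - 1))]
  -- step 2: (a^(q-1))² ≤ a² + a^p
  have h4 : (a ^ (q - 1)) ^ 2 ≤ a ^ 2 + a ^ p := by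
    rw [aux_sq_rpow ha]
    calc a ^ ((q - 1) * 2) ≤ a ^ (2:ℝ) + a ^ p :=
          aux_rpow_le (by linarith) (by linarith) ha
      _ = a ^ 2 + a ^ p := by rw [Real.rpow_two]
  have h5 : (b ^ (q - 1)) ^ 2 ≤ b ^ 2 + b ^ p := by
    rw [aux_sq_rpow hb]
    calc b ^ ((q - 1) * 2) ≤ b ^ (2:ℝ) + b ^ p :=
          aux_rpow_le (by linarith) (by linarith) hb
      _ = b ^ 2 + b ^ p := by rw [Real.rpow_two]
  -- step 3: weighted bounds
  have hya := aux_young hp hK hc ha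
  have hyb := aux_young hp hK hc hb
  have hap : 0 ≤ a ^ p := Real.rpow_nonneg ha _
  have hbp : 0 ≤ b ^ p := Real.rpow_nonneg hb _
  have hc0 : (0:ℝ) ≤ c ^ 2 := sq_nonneg c
  have hK0 : (0:ℝ) ≤ K ^ 2 := sq_nonneg K
  have hQ : (1:ℝ) ≤ (K ^ 2) ^ (p / (p - 2)) :=
    Real.one_le_rpow (by nlinarith) (div_nonneg (by linarith) (by linarith))
  have hQ0 : (0:ℝ) ≤ (K ^ 2) ^ (p / (p - 2)) := by linarith
  -- combine
  have hS2 : ((1 + a ^ (q - 2) + b ^ (q - 2)) * (a + b)) ^ 2 ≤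
      64 * (2 * a ^ 2 + 2 * b ^ 2 + a ^ p + b ^ p) := by linarith
  have hc4 : (c ^ 2 * ((1 + a ^ (q - 2) + b ^ (q - 2)) * (a + b))) ^ 2 =
      (c ^ 2) ^ 2 * ((1 + a ^ (q - 2) + b ^ (q - 2)) * (a + b)) ^ 2 := by ring
  rw [hc4]
  have hmain : (c ^ 2) ^ 2 * ((1 + a ^ (q - 2) + b ^ (q - 2)) * (a + b)) ^ 2 ≤
      (c ^ 2) ^ 2 * (64 * (2 * a ^ 2 + 2 * b ^ 2 + a ^ p + b ^ p)) :=
    mul_le_mul_of_nonneg_left hS2 (by positivity)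
  refine hmain.trans ?_
  -- now distribute and use the young bounds
  have e1 : (c ^ 2) ^ 2 * a ^ 2 ≤ K ^ 2 * ((K ^ 2) ^ (p / (p - 2)) * c ^ 2 + a ^ p) := by
    calc (c ^ 2) ^ 2 * a ^ 2 = c ^ 2 * (c ^ 2 * a ^ 2) := by ring
      _ ≤ K ^ 2 * (c ^ 2 * a ^ 2) :=
          mul_le_mul_of_nonneg_right hc (by positivity)
      _ ≤ K ^ 2 * ((K ^ 2) ^ (p / (p - 2)) * c ^ 2 + a ^ p) :=
          mul_le_mul_of_nonneg_left hya (by positivity)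
  have e2 : (c ^ 2) ^ 2 * b ^ 2 ≤ K ^ 2 * ((K ^ 2) ^ (p / (p - 2)) * c ^ 2 + b ^ p) := by
    calc (c ^ 2) ^ 2 * b ^ 2 = c ^ 2 * (c ^ 2 * b ^ 2) := by ring
      _ ≤ K ^ 2 * (c ^ 2 * b ^ 2) :=
          mul_le_mul_of_nonneg_right hc (by positivity)
      _ ≤ K ^ 2 * ((K ^ 2) ^ (p / (p - 2)) * c ^ 2 + b ^ p) :=
          mul_le_mul_of_nonneg_left hyb (by positivity)
  have hcK : (c ^ 2) ^ 2 ≤ K ^ 4 := by nlinarith [hc0, hK0]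
  have e3 : (c ^ 2) ^ 2 * a ^ p ≤ K ^ 4 * a ^ p :=
    mul_le_mul_of_nonneg_right hcK hap
  have e4 : (c ^ 2) ^ 2 * b ^ p ≤ K ^ 4 * b ^ p :=
    mul_le_mul_of_nonneg_right hcK hbp
  have expand : (c ^ 2) ^ 2 * (64 * (2 * a ^ 2 + 2 * b ^ 2 + a ^ p + b ^ p)) =
      64 * (2 * ((c ^ 2) ^ 2 * a ^ 2) + 2 * ((c ^ 2) ^ 2 * b ^ 2) +
        (c ^ 2) ^ 2 * a ^ p + (c ^ 2) ^ 2 * b ^ p) := by ring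
  rw [expand]
  set Q := (K ^ 2) ^ (p / (p - 2)) with hQdef
  nlinarith [mul_nonneg (mul_nonneg hK0 hQ0) hap, mul_nonneg (mul_nonneg hK0 hQ0) hbp,
    mul_nonneg (mul_nonneg hK0 hQ0) hc0, mul_nonneg hK0 hc0,
    mul_nonneg (mul_nonneg hK0 hK0) hc0, e1, e2, e3, e4]

set_option maxHeartbeats 1000000 in
/-- Linear-in-`‖u₁-u₂‖₂` Lipschitz estimate for the diffusion coefficients:
there is `C > 0` (independent of `u₁, u₂`) such that for all `u₁, u₂ ∈ L² ∩ L^p`,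
`∑_k ∫ κ² (σ₂ₖ(·,u₁) - σ₂ₖ(·,u₂))² ≤ C (1 + ‖u₁‖_p^{p/2} + ‖u₂‖_p^{p/2}) ‖u₁-u₂‖₂`. -/
theorem diffusion_lipschitz_estimate_linear
    (n : ℕ) (hn : 1 ≤ n) (p q : ℝ) (hp : 2 < p) (hq : 2 ≤ q) (hq' : q ≤ 1 + p / 2)
    (κ : EuclideanSpace ℝ (Fin n) → ℝ)
    (hκ2 : MemLp κ 2 volume) (hκtop : MemLp κ ⊤ volume)
    (σ₂ : ℕ → EuclideanSpace ℝ (Fin n) → ℝ → ℝ)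
    (hσ₂ : ∀ k, Measurable (Function.uncurry (σ₂ k)))
    (α : ℕ → ℝ) (hα0 : ∀ k, 0 ≤ α k) (hα : Summable α)
    (hlip : ∀ k x v₁ v₂, (σ₂ k x v₁ - σ₂ k x v₂) ^ 2 ≤
      α k * (1 + |v₁| ^ (q - 2) + |v₂| ^ (q - 2)) * (v₁ - v₂) ^ 2) :
    ∃ C > 0, ∀ u₁ u₂ : EuclideanSpace ℝ (Fin n) → ℝ,
      MemLp u₁ 2 volume → MemLp u₁ (ENNReal.ofReal p) volume →
      MemLp u₂ 2 volume → MemLp u₂ (ENNReal.ofReal p) volume →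
      ∑' k, ∫ x, (κ x) ^ 2 * (σ₂ k x (u₁ x) - σ₂ k x (u₂ x)) ^ 2 ≤
        C * (1 + (eLpNorm u₁ (ENNReal.ofReal p) volume).toReal ^ (p / 2) +
              (eLpNorm u₂ (ENNReal.ofReal p) volume).toReal ^ (p / 2)) *
          (eLpNorm (fun x => u₁ x - u₂ x) 2 volume).toReal := by
  have hp0 : (0:ℝ) < p := by linarith
  set P : ℝ≥0∞ := ENNReal.ofReal p with hPdef
  have hP0 : P ≠ 0 := by
    simp only [hPdef, Ne, ENNReal.ofReal_eq_zero, not_le]; linarith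
  have hPtop : P ≠ ⊤ := ENNReal.ofReal_ne_top
  have hPr : P.toReal = p := ENNReal.toReal_ofReal hp0.le
  set K : ℝ := max 1 (eLpNorm κ ⊤ volume).toReal with hKdef
  have hK1 : (1:ℝ) ≤ K := le_max_left _ _
  have hK0 : (0:ℝ) < K := lt_of_lt_of_le one_pos hK1
  have hκK : ∀ᵐ x ∂(volume : Measure (EuclideanSpace ℝ (Fin n))), κ x ^ 2 ≤ K ^ 2 := by
    have htop : eLpNormEssSup κ (volume : Measure (EuclideanSpace ℝ (Fin n))) < ⊤ := by
      have h2 := hκtop.2; rwa [eLpNorm_exponent_top] at h2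
    filter_upwards [ae_le_eLpNormEssSup (f := κ)
      (μ := (volume : Measure (EuclideanSpace ℝ (Fin n))))] with x hx
    have h1 : ‖κ x‖ ≤ (eLpNormEssSup κ (volume : Measure (EuclideanSpace ℝ (Fin n)))).toReal := by
      have h2 := ENNReal.toReal_mono htop.ne hx
      simpa [coe_nnnorm] using h2
    have h2 : |κ x| ≤ K := by
      rw [Real.norm_eq_abs] at h1
      refine h1.trans ?_
      rw [hKdef, eLpNorm_exponent_top]
      exact le_max_right _ _
    calc κ x ^ 2 = |κ x| ^ 2 := (sq_abs _).symm
      _ ≤ K ^ 2 := pow_le_pow_left₀ (abs_nonneg _) h2 2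
  set Mc : ℝ := 64 * (4 * (K ^ 2 * ((K ^ 2) ^ (p / (p - 2)))) + 2 * K ^ 2 + K ^ 4) with hMc
  have hQpos : (0:ℝ) < (K ^ 2) ^ (p / (p - 2)) := Real.rpow_pos_of_pos (by positivity) _
  have hMc0 : (0:ℝ) < Mc := by
    have h1 : (0:ℝ) < K ^ 2 := by positivity
    have h2 : (0:ℝ) < K ^ 4 := by positivity
    rw [hMc]; nlinarith
  have hκsq : Integrable (fun x => κ x ^ 2)
      (volume : Measure (EuclideanSpace ℝ (Fin n))) := hκ2.integrable_sq
  have hCκ0 : 0 ≤ ∫ x, κ x ^ 2 ∂(volume : Measure (EuclideanSpace ℝ (Fin n))) :=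
    integral_nonneg fun x => sq_nonneg _
  set M' : ℝ := Mc * ((∫ x, κ x ^ 2 ∂(volume : Measure (EuclideanSpace ℝ (Fin n)))) + 1)
    with hM'
  have hM'0 : (0:ℝ) < M' := by rw [hM']; nlinarith
  have hA0 : 0 ≤ ∑' k, α k := tsum_nonneg hα0
  refine ⟨((∑' k, α k) + 1) * (Real.sqrt M' + 1), by nlinarith [Real.sqrt_nonneg M'], ?_⟩
  intro u₁ u₂ hu12 hu1p hu22 hu2p
  have hu1m : AEMeasurable u₁ (volume : Measure (EuclideanSpace ℝ (Fin n))) :=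
    hu12.aestronglyMeasurable.aemeasurable
  have hu2m : AEMeasurable u₂ (volume : Measure (EuclideanSpace ℝ (Fin n))) :=
    hu22.aestronglyMeasurable.aemeasurable
  have hκm : AEMeasurable κ (volume : Measure (EuclideanSpace ℝ (Fin n))) :=
    hκ2.aestronglyMeasurable.aemeasurable
  have habs1 : AEMeasurable (fun x => |u₁ x|)
      (volume : Measure (EuclideanSpace ℝ (Fin n))) := by
    simpa [Real.norm_eq_abs] using hu1m.norm
  have habs2 : AEMeasurable (fun x => |u₂ x|)
      (volume : Measure (EuclideanSpace ℝ (Fin n))) := by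
    simpa [Real.norm_eq_abs] using hu2m.norm
  set F : EuclideanSpace ℝ (Fin n) → ℝ := fun x =>
    κ x ^ 2 * ((1 + |u₁ x| ^ (q - 2) + |u₂ x| ^ (q - 2)) * (|u₁ x| + |u₂ x|)) with hFdef
  set g : EuclideanSpace ℝ (Fin n) → ℝ := fun x => |u₁ x - u₂ x| with hgdef
  have hFm : AEMeasurable F (volume : Measure (EuclideanSpace ℝ (Fin n))) := by
    exact (hκm.pow_const 2).mul
      (((aemeasurable_const.add (habs1.pow_const (q - 2))).add
        (habs2.pow_const (q - 2))).mul (habs1.add habs2))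
  have hFn : ∀ x, 0 ≤ F x := fun x => by
    rw [hFdef]
    positivity
  have hu1pi : Integrable (fun x => |u₁ x| ^ p)
      (volume : Measure (EuclideanSpace ℝ (Fin n))) := by
    have h := hu1p.integrable_norm_rpow hP0 hPtop
    simpa [hPr, Real.norm_eq_abs] using h
  have hu2pi : Integrable (fun x => |u₂ x| ^ p)
      (volume : Measure (EuclideanSpace ℝ (Fin n))) := by
    have h := hu2p.integrable_norm_rpow hP0 hPtop
    simpa [hPr, Real.norm_eq_abs] using h
  have hF2maj : ∀ᵐ x ∂(volume : Measure (EuclideanSpace ℝ (Fin n))),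
      F x ^ 2 ≤ Mc * (κ x ^ 2 + |u₁ x| ^ p + |u₂ x| ^ p) := by
    filter_upwards [hκK] with x hx
    exact key_pointwise hp hq hq' hK1 (abs_nonneg (u₁ x)) (abs_nonneg (u₂ x)) hx
  have hmaji : Integrable (fun x => Mc * (κ x ^ 2 + |u₁ x| ^ p + |u₂ x| ^ p))
      (volume : Measure (EuclideanSpace ℝ (Fin n))) :=
    ((hκsq.add hu1pi).add hu2pi).const_mul Mc
  have hF2i : Integrable (fun x => F x ^ 2)
      (volume : Measure (EuclideanSpace ℝ (Fin n))) := by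
    refine hmaji.mono' (hFm.pow_const 2).aestronglyMeasurable ?_
    filter_upwards [hF2maj] with x hx
    rw [Real.norm_eq_abs, abs_of_nonneg (sq_nonneg _)]
    exact hx
  have hF2 : MemLp F 2 (volume : Measure (EuclideanSpace ℝ (Fin n))) :=
    (memLp_two_iff_integrable_sq hFm.aestronglyMeasurable).2 hF2i
  have hd2 : MemLp (fun x => u₁ x - u₂ x) 2
      (volume : Measure (EuclideanSpace ℝ (Fin n))) := hu12.sub hu22
  have hg2 : MemLp g 2 (volume : Measure (EuclideanSpace ℝ (Fin n))) := by
    have h := hd2.norm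
    simpa [hgdef, Real.norm_eq_abs] using h
  set N₁ : ℝ := (eLpNorm u₁ P volume).toReal with hN1def
  set N₂ : ℝ := (eLpNorm u₂ P volume).toReal with hN2def
  have hN10 : 0 ≤ N₁ := ENNReal.toReal_nonneg
  have hN20 : 0 ≤ N₂ := ENNReal.toReal_nonneg
  have hint1 : 0 ≤ ∫ x, |u₁ x| ^ p ∂(volume : Measure (EuclideanSpace ℝ (Fin n))) :=
    integral_nonneg fun x => Real.rpow_nonneg (abs_nonneg _) _
  have hint2 : 0 ≤ ∫ x, |u₂ x| ^ p ∂(volume : Measure (EuclideanSpace ℝ (Fin n))) :=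
    integral_nonneg fun x => Real.rpow_nonneg (abs_nonneg _) _
  have hN1p : ∫ x, |u₁ x| ^ p ∂(volume : Measure (EuclideanSpace ℝ (Fin n))) = N₁ ^ p := by
    have h := hu1p.eLpNorm_eq_integral_rpow_norm hP0 hPtop
    rw [hN1def, h, ENNReal.toReal_ofReal (Real.rpow_nonneg
      (integral_nonneg fun x => Real.rpow_nonneg (norm_nonneg _) _) _), hPr]
    rw [← Real.rpow_mul (integral_nonneg fun x => Real.rpow_nonneg (norm_nonneg _) _),
      inv_mul_cancel₀ (ne_of_gt hp0), Real.rpow_one]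
    simp [Real.norm_eq_abs]
  have hN2p : ∫ x, |u₂ x| ^ p ∂(volume : Measure (EuclideanSpace ℝ (Fin n))) = N₂ ^ p := by
    have h := hu2p.eLpNorm_eq_integral_rpow_norm hP0 hPtop
    rw [hN2def, h, ENNReal.toReal_ofReal (Real.rpow_nonneg
      (integral_nonneg fun x => Real.rpow_nonneg (norm_nonneg _) _) _), hPr]
    rw [← Real.rpow_mul (integral_nonneg fun x => Real.rpow_nonneg (norm_nonneg _) _),
      inv_mul_cancel₀ (ne_of_gt hp0), Real.rpow_one]
    simp [Real.norm_eq_abs]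
  have hF2le : ∫ x, F x ^ 2 ∂(volume : Measure (EuclideanSpace ℝ (Fin n))) ≤
      M' * (1 + N₁ ^ p + N₂ ^ p) := by
    have h1 : ∫ x, F x ^ 2 ∂(volume : Measure (EuclideanSpace ℝ (Fin n))) ≤
        ∫ x, Mc * (κ x ^ 2 + |u₁ x| ^ p + |u₂ x| ^ p)
          ∂(volume : Measure (EuclideanSpace ℝ (Fin n))) :=
      integral_mono_ae hF2i hmaji hF2maj
    have h2 : ∫ x, Mc * (κ x ^ 2 + |u₁ x| ^ p + |u₂ x| ^ p)
        ∂(volume : Measure (EuclideanSpace ℝ (Fin n))) =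
        Mc * ((∫ x, κ x ^ 2 ∂(volume : Measure (EuclideanSpace ℝ (Fin n)))) + N₁ ^ p + N₂ ^ p) := by
      rw [integral_const_mul,
        integral_add (f := fun x => κ x ^ 2 + |u₁ x| ^ p) (g := fun x => |u₂ x| ^ p)
          (hκsq.add hu1pi) hu2pi,
        integral_add (f := fun x => κ x ^ 2) (g := fun x => |u₁ x| ^ p) hκsq hu1pi,
        hN1p, hN2p]
    have hN1p0 : 0 ≤ N₁ ^ p := Real.rpow_nonneg hN10 _
    have hN2p0 : 0 ≤ N₂ ^ p := Real.rpow_nonneg hN20 _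
    rw [hM']
    nlinarith [mul_nonneg hMc0.le hN1p0, mul_nonneg hMc0.le hN2p0,
      mul_nonneg hMc0.le hCκ0, mul_nonneg (mul_nonneg hMc0.le hCκ0) hN1p0,
      mul_nonneg (mul_nonneg hMc0.le hCκ0) hN2p0]
  -- Hölder's inequality with exponents (2,2)
  have h22 : Real.HolderConjugate 2 2 := by
    rw [Real.holderConjugate_iff]; exact ⟨one_lt_two, by norm_num⟩
  have hof2 : (ENNReal.ofReal (2:ℝ)) = (2 : ℝ≥0∞) := by
    simp
  have hHolder := integral_mul_le_Lp_mul_Lq_of_nonneg (μ := volume) h22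
    (Filter.Eventually.of_forall hFn) (Filter.Eventually.of_forall fun x => abs_nonneg (u₁ x - u₂ x))
    (by rw [hof2]; exact hF2) (by rw [hof2]; exact hg2)
  set D : ℝ := (eLpNorm (fun x => u₁ x - u₂ x) 2 volume).toReal with hDdef
  have hD0 : 0 ≤ D := ENNReal.toReal_nonneg
  have hgD : (∫ x, g x ^ (2:ℝ) ∂(volume : Measure (EuclideanSpace ℝ (Fin n)))) ^ (1/(2:ℝ)) = D := by
    have h := hd2.eLpNorm_eq_integral_rpow_norm (by norm_num) (by norm_num)
    rw [hDdef, h, ENNReal.toReal_ofReal (Real.rpow_nonneg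
      (integral_nonneg fun x => Real.rpow_nonneg (norm_nonneg _) _) _)]
    simp only [ENNReal.toReal_ofNat, one_div]
    have hcongr : (∫ x, g x ^ (2:ℝ) ∂(volume : Measure (EuclideanSpace ℝ (Fin n)))) =
        ∫ a, ‖u₁ a - u₂ a‖ ^ (2:ℝ) ∂(volume : Measure (EuclideanSpace ℝ (Fin n))) := by
      refine integral_congr_ae (Filter.Eventually.of_forall fun x => ?_)
      simp [hgdef, Real.norm_eq_abs]
    rw [hcongr]
  -- pointwise domination per k
  have hpt : ∀ k, ∀ x, κ x ^ 2 * (σ₂ k x (u₁ x) - σ₂ k x (u₂ x)) ^ 2 ≤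
      α k * (F x * g x) := by
    intro k x
    have h1 := hlip k x (u₁ x) (u₂ x)
    have habs : (u₁ x - u₂ x) ^ 2 ≤ (|u₁ x| + |u₂ x|) * |u₁ x - u₂ x| := by
      have h2 : |u₁ x - u₂ x| ≤ |u₁ x| + |u₂ x| := abs_sub _ _
      rw [← sq_abs, pow_two]
      exact mul_le_mul_of_nonneg_right h2 (abs_nonneg _)
    have hF1 : 0 ≤ 1 + |u₁ x| ^ (q - 2) + |u₂ x| ^ (q - 2) := by positivity
    calc κ x ^ 2 * (σ₂ k x (u₁ x) - σ₂ k x (u₂ x)) ^ 2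
        ≤ κ x ^ 2 * (α k * (1 + |u₁ x| ^ (q - 2) + |u₂ x| ^ (q - 2)) * (u₁ x - u₂ x) ^ 2) :=
          mul_le_mul_of_nonneg_left h1 (sq_nonneg _)
      _ ≤ κ x ^ 2 * (α k * (1 + |u₁ x| ^ (q - 2) + |u₂ x| ^ (q - 2)) *
            ((|u₁ x| + |u₂ x|) * |u₁ x - u₂ x|)) := by
          refine mul_le_mul_of_nonneg_left ?_ (sq_nonneg _)
          exact mul_le_mul_of_nonneg_left habs (mul_nonneg (hα0 k) hF1)
      _ = α k * (F x * g x) := by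
          simp only [hFdef, hgdef]
          ring
  have hFgi : Integrable (fun x => F x * g x)
      (volume : Measure (EuclideanSpace ℝ (Fin n))) := by
    refine (hF2i.add hg2.integrable_sq).mono'
      (hFm.aestronglyMeasurable.mul hg2.aestronglyMeasurable) ?_
    refine Filter.Eventually.of_forall fun x => ?_
    have hg0 : 0 ≤ g x := by simp only [hgdef]; positivity
    have h2 : ‖F x * g x‖ ≤ F x ^ 2 + g x ^ 2 := by
      rw [Real.norm_eq_abs, abs_of_nonneg (mul_nonneg (hFn x) hg0)]
      nlinarith [sq_nonneg (F x - g x)]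
    simpa using h2
  have hFg0 : 0 ≤ ∫ x, F x * g x ∂(volume : Measure (EuclideanSpace ℝ (Fin n))) :=
    integral_nonneg fun x => mul_nonneg (hFn x) (abs_nonneg _)
  have hIk : ∀ k, ∫ x, κ x ^ 2 * (σ₂ k x (u₁ x) - σ₂ k x (u₂ x)) ^ 2
      ∂(volume : Measure (EuclideanSpace ℝ (Fin n))) ≤
      α k * ∫ x, F x * g x ∂(volume : Measure (EuclideanSpace ℝ (Fin n))) := by
    intro k
    have h := integral_mono_of_nonneg
      (Filter.Eventually.of_forall fun x => by positivity)
      (hFgi.const_mul (α k)) (Filter.Eventually.of_forall (hpt k))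
    rwa [integral_const_mul] at h
  have hIk0 : ∀ k, 0 ≤ ∫ x, κ x ^ 2 * (σ₂ k x (u₁ x) - σ₂ k x (u₂ x)) ^ 2
      ∂(volume : Measure (EuclideanSpace ℝ (Fin n))) :=
    fun k => integral_nonneg fun x => by positivity
  have hsummable : Summable (fun k => ∫ x, κ x ^ 2 * (σ₂ k x (u₁ x) - σ₂ k x (u₂ x)) ^ 2
      ∂(volume : Measure (EuclideanSpace ℝ (Fin n)))) :=
    Summable.of_nonneg_of_le hIk0 hIk (hα.mul_right _)
  have htsum : ∑' k, ∫ x, κ x ^ 2 * (σ₂ k x (u₁ x) - σ₂ k x (u₂ x)) ^ 2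
      ∂(volume : Measure (EuclideanSpace ℝ (Fin n))) ≤
      (∑' k, α k) * ∫ x, F x * g x ∂(volume : Measure (EuclideanSpace ℝ (Fin n))) := by
    calc ∑' k, ∫ x, κ x ^ 2 * (σ₂ k x (u₁ x) - σ₂ k x (u₂ x)) ^ 2
        ∂(volume : Measure (EuclideanSpace ℝ (Fin n)))
        ≤ ∑' k, α k * ∫ x, F x * g x ∂(volume : Measure (EuclideanSpace ℝ (Fin n))) :=
          Summable.tsum_le_tsum hIk hsummable (hα.mul_right _)
      _ = (∑' k, α k) * ∫ x, F x * g x ∂(volume : Measure (EuclideanSpace ℝ (Fin n))) :=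
          tsum_mul_right
  -- the square-root estimates
  have hR0 : 0 ≤ 1 + N₁ ^ (p / 2) + N₂ ^ (p / 2) := by positivity
  have hFrpow : ∫ x, F x ^ (2:ℝ) ∂(volume : Measure (EuclideanSpace ℝ (Fin n))) =
      ∫ x, F x ^ 2 ∂(volume : Measure (EuclideanSpace ℝ (Fin n))) :=
    integral_congr_ae (Filter.Eventually.of_forall fun x => Real.rpow_two _)
  have key1 : (∫ x, F x ^ (2:ℝ) ∂(volume : Measure (EuclideanSpace ℝ (Fin n)))) ^ (1/(2:ℝ)) ≤
      Real.sqrt M' * (1 + N₁ ^ (p / 2) + N₂ ^ (p / 2)) := by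
    rw [hFrpow, ← Real.sqrt_eq_rpow]
    have hsq1 : (N₁ ^ (p / 2)) ^ 2 = N₁ ^ p := by
      rw [aux_sq_rpow hN10, div_mul_cancel₀]
      norm_num
    have hsq2 : (N₂ ^ (p / 2)) ^ 2 = N₂ ^ p := by
      rw [aux_sq_rpow hN20, div_mul_cancel₀]
      norm_num
    have hN1h0 : 0 ≤ N₁ ^ (p / 2) := Real.rpow_nonneg hN10 _
    have hN2h0 : 0 ≤ N₂ ^ (p / 2) := Real.rpow_nonneg hN20 _
    calc Real.sqrt (∫ x, F x ^ 2 ∂(volume : Measure (EuclideanSpace ℝ (Fin n))))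
        ≤ Real.sqrt (M' * (1 + N₁ ^ p + N₂ ^ p)) := Real.sqrt_le_sqrt hF2le
      _ ≤ Real.sqrt (M' * (1 + N₁ ^ (p / 2) + N₂ ^ (p / 2)) ^ 2) := by
          refine Real.sqrt_le_sqrt ?_
          refine mul_le_mul_of_nonneg_left ?_ hM'0.le
          nlinarith [mul_nonneg hN1h0 hN2h0]
      _ = Real.sqrt M' * (1 + N₁ ^ (p / 2) + N₂ ^ (p / 2)) := by
          rw [Real.sqrt_mul hM'0.le, Real.sqrt_sq hR0]
  have hHolder2 : ∫ x, F x * g x ∂(volume : Measure (EuclideanSpace ℝ (Fin n))) ≤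
      Real.sqrt M' * (1 + N₁ ^ (p / 2) + N₂ ^ (p / 2)) * D := by
    calc ∫ x, F x * g x ∂(volume : Measure (EuclideanSpace ℝ (Fin n)))
        ≤ (∫ x, F x ^ (2:ℝ) ∂(volume : Measure (EuclideanSpace ℝ (Fin n)))) ^ (1/(2:ℝ)) *
          (∫ x, g x ^ (2:ℝ) ∂(volume : Measure (EuclideanSpace ℝ (Fin n)))) ^ (1/(2:ℝ)) := by
          simpa [hgdef] using hHolder
      _ = (∫ x, F x ^ (2:ℝ) ∂(volume : Measure (EuclideanSpace ℝ (Fin n)))) ^ (1/(2:ℝ)) * D := by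
          rw [hgD]
      _ ≤ Real.sqrt M' * (1 + N₁ ^ (p / 2) + N₂ ^ (p / 2)) * D :=
          mul_le_mul_of_nonneg_right key1 hD0
  refine htsum.trans ?_
  have hs0 : 0 ≤ Real.sqrt M' := Real.sqrt_nonneg _
  calc (∑' k, α k) * ∫ x, F x * g x ∂(volume : Measure (EuclideanSpace ℝ (Fin n)))
      ≤ (∑' k, α k) * (Real.sqrt M' * (1 + N₁ ^ (p / 2) + N₂ ^ (p / 2)) * D) :=
        mul_le_mul_of_nonneg_left hHolder2 hA0
    _ ≤ ((∑' k, α k) + 1) * (Real.sqrt M' + 1) * (1 + N₁ ^ (p / 2) + N₂ ^ (p / 2)) * D := by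
        nlinarith [mul_nonneg hR0 hD0, mul_nonneg (mul_nonneg hs0 hR0) hD0,
          mul_nonneg (mul_nonneg hA0 hR0) hD0]
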